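/- arXiv:1402.7235 — 2 statements merged into one kernel-verified Lean document; each statement's English description precedes it below -/
import Mathlib

section
/- Let H be a finite loopless graph, let t ≥ 0 and r ≥ 0 be integers, and suppose H admits a proper t-colouring λ such that every vertex of H is adjacent to vertices of at most r distinct colours (other than possibly counting repetitions). Then the chromatic number of H satisfies χ(H) ≤ ⌊tr/(r+1)⌋ + 1. -/
/-- A multigraph: a type of vertices, a type of edges, and an incidence map
sending each edge to an unordered pair of vertices. -/
structure Multigraph (V E : Type) where
  inc : E → Sym2 V

namespace Multigraph

variable {V E : Type}

/-- A multigraph is loopless if no edge joins a vertex to itself. -/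
def Loopless (G : Multigraph V E) : Prop := ∀ e : E, ¬ (G.inc e).IsDiag

/-- A multigraph is simple if it is loopless and has no parallel edges. -/
def Simple (G : Multigraph V E) : Prop := G.Loopless ∧ Function.Injective G.inc

/-- The underlying simple graph of a multigraph. -/
def toSimple (G : Multigraph V E) : SimpleGraph V where
  Adj u v := u ≠ v ∧ ∃ e : E, G.inc e = s(u, v)
  symm := ⟨by
    rintro u v ⟨huv, e, he⟩
    exact ⟨Ne.symm huv, e, by rw [he, Sym2.eq_swap]⟩⟩
  loopless := ⟨by rintro v ⟨h, _⟩; exact h rfl⟩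

/-- The degree of a vertex: the number of edges incident to it. -/
noncomputable def degree (G : Multigraph V E) (v : V) : ℕ := Nat.card {e : E // v ∈ G.inc e}

/-- The number of edges of a multigraph. -/
noncomputable def edgeCard (_G : Multigraph V E) : ℕ := Nat.card E

/-- An `ℓ`-arc (non-backtracking walk of length `ℓ`): an alternating sequence of
vertices and edges with consecutive edges distinct. -/
@[ext]
structure Arc (G : Multigraph V E) (ℓ : ℕ) where
  verts : Fin (ℓ + 1) → V
  edges : Fin ℓ → E
  inc_eq : ∀ i : Fin ℓ, G.inc (edges i) = s(verts i.castSucc, verts i.succ)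
  nb : ∀ i j : Fin ℓ, (i : ℕ) + 1 = (j : ℕ) → edges i ≠ edges j

variable {G : Multigraph V E}

/-- The reverse of an arc. -/
def Arc.reverse {ℓ : ℕ} (A : G.Arc ℓ) : G.Arc ℓ where
  verts i := A.verts i.rev
  edges i := A.edges i.rev
  inc_eq i := by
    show G.inc (A.edges i.rev) = s(A.verts i.castSucc.rev, A.verts i.succ.rev)
    rw [Fin.rev_castSucc, Fin.rev_succ, A.inc_eq i.rev, Sym2.eq_swap]
  nb i j hij h := by
    refine A.nb j.rev i.rev ?_ (h.symm)
    have hi := i.isLt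
    have hj := j.isLt
    simp only [Fin.val_rev]
    omega

lemma Arc.reverse_reverse {ℓ : ℕ} (A : G.Arc ℓ) : A.reverse.reverse = A := by
  ext i
  · show A.verts i.rev.rev = A.verts i
    rw [Fin.rev_rev]
  · show A.edges i.rev.rev = A.edges i
    rw [Fin.rev_rev]

/-- The length-`ℓ` prefix of an `(ℓ+1)`-arc. -/
def Arc.init {ℓ : ℕ} (A : G.Arc (ℓ + 1)) : G.Arc ℓ where
  verts i := A.verts i.castSucc
  edges i := A.edges i.castSucc
  inc_eq i := by
    show G.inc (A.edges i.castSucc) = s(A.verts i.castSucc.castSucc, A.verts i.succ.castSucc)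
    rw [A.inc_eq i.castSucc, Fin.succ_castSucc]
  nb i j hij h := A.nb i.castSucc j.castSucc (by simpa using hij) h

/-- The length-`ℓ` suffix of an `(ℓ+1)`-arc. -/
def Arc.tail {ℓ : ℕ} (A : G.Arc (ℓ + 1)) : G.Arc ℓ where
  verts i := A.verts i.succ
  edges i := A.edges i.succ
  inc_eq i := by
    show G.inc (A.edges i.succ) = s(A.verts i.castSucc.succ, A.verts i.succ.succ)
    rw [A.inc_eq i.succ, Fin.succ_castSucc]
  nb i j hij h := A.nb i.succ j.succ (by simpa using hij) h

lemma Arc.reverse_init {ℓ : ℕ} (A : G.Arc (ℓ + 1)) : A.reverse.init = A.tail.reverse := by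
  ext i
  · show A.verts (Fin.castSucc i).rev = A.verts i.rev.succ
    rw [Fin.rev_castSucc]
  · show A.edges (Fin.castSucc i).rev = A.edges i.rev.succ
    rw [Fin.rev_castSucc]

lemma Arc.reverse_tail {ℓ : ℕ} (A : G.Arc (ℓ + 1)) : A.reverse.tail = A.init.reverse := by
  ext i
  · show A.verts (Fin.succ i).rev = A.verts i.rev.castSucc
    rw [Fin.rev_succ]
  · show A.edges (Fin.succ i).rev = A.edges i.rev.castSucc
    rw [Fin.rev_succ]

/-- The reversal relation on arcs. -/
def LinkRel (G : Multigraph V E) {ℓ : ℕ} (A B : G.Arc ℓ) : Prop := B = A.reverse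

/-- An `ℓ`-link: an `ℓ`-arc up to reversal. -/
def Link (G : Multigraph V E) (ℓ : ℕ) : Type := Quot (G.LinkRel (ℓ := ℓ))

/-- The `ℓ`-link determined by an `ℓ`-arc. -/
def Link.mk {ℓ : ℕ} (A : G.Arc ℓ) : G.Link ℓ := Quot.mk (G.LinkRel) A

lemma Link.mk_reverse {ℓ : ℕ} (A : G.Arc ℓ) : (Link.mk A.reverse : G.Link ℓ) = Link.mk A :=
  (Quot.sound (show G.LinkRel A A.reverse from rfl)).symm

/-- The unordered pair of `ℓ`-links that are the two length-`ℓ` subsequences of an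
`(ℓ+1)`-link. -/
def linkEnds (G : Multigraph V E) {ℓ : ℕ} : G.Link (ℓ + 1) → Sym2 (G.Link ℓ) :=
  Quot.lift (fun A => s(Link.mk A.init, Link.mk A.tail)) (by
    rintro A B rfl
    show s(Link.mk A.init, Link.mk A.tail) = s(Link.mk A.reverse.init, Link.mk A.reverse.tail)
    rw [Arc.reverse_init, Arc.reverse_tail, Link.mk_reverse, Link.mk_reverse, Sym2.eq_swap])

/-- The `ℓ`-link graph of `G`: vertices are the `ℓ`-links, and for each
`(ℓ+1)`-link there is one edge joining its two length-`ℓ` subsequences. -/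
def linkGraph (G : Multigraph V E) (ℓ : ℕ) : Multigraph (G.Link ℓ) (G.Link (ℓ + 1)) where
  inc := G.linkEnds

/-- The set of edges used by an arc. -/
def Arc.edgeSet {ℓ : ℕ} (A : G.Arc ℓ) : Set E := Set.range A.edges

/-- The set of vertices used by an arc. -/
def Arc.vertSet {ℓ : ℕ} (A : G.Arc ℓ) : Set V := Set.range A.verts

lemma Arc.edgeSet_reverse {ℓ : ℕ} (A : G.Arc ℓ) : A.reverse.edgeSet = A.edgeSet := by
  ext e
  constructor
  · rintro ⟨i, rfl⟩; exact ⟨i.rev, rfl⟩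
  · rintro ⟨i, rfl⟩; exact ⟨i.rev, by show A.edges i.rev.rev = _; rw [Fin.rev_rev]⟩

lemma Arc.vertSet_reverse {ℓ : ℕ} (A : G.Arc ℓ) : A.reverse.vertSet = A.vertSet := by
  ext v
  constructor
  · rintro ⟨i, rfl⟩; exact ⟨i.rev, rfl⟩
  · rintro ⟨i, rfl⟩; exact ⟨i.rev, by show A.verts i.rev.rev = _; rw [Fin.rev_rev]⟩

/-- The set of edges used by a link. -/
def Link.edgeSet {ℓ : ℕ} : G.Link ℓ → Set E :=
  Quot.lift Arc.edgeSet (by rintro A B rfl; exact (Arc.edgeSet_reverse A).symm)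

/-- The set of vertices used by a link. -/
def Link.vertSet {ℓ : ℕ} : G.Link ℓ → Set V :=
  Quot.lift Arc.vertSet (by rintro A B rfl; exact (Arc.vertSet_reverse A).symm)

lemma Arc.tail_init_comm {ℓ : ℕ} (A : G.Arc (ℓ + 2)) : A.tail.init = A.init.tail := by
  ext i
  · show A.verts (Fin.castSucc i).succ = A.verts (Fin.succ i).castSucc
    rw [Fin.succ_castSucc]
  · show A.edges (Fin.castSucc i).succ = A.edges (Fin.succ i).castSucc
    rw [Fin.succ_castSucc]

/-- The middle `ℓ`-segment of an `(ℓ+2)`-arc, obtained by deleting the first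
and last edge. -/
def Arc.mid2 {ℓ : ℕ} (A : G.Arc (ℓ + 2)) : G.Arc ℓ := A.tail.init

lemma Arc.mid2_reverse {ℓ : ℕ} (A : G.Arc (ℓ + 2)) : A.reverse.mid2 = A.mid2.reverse := by
  show A.reverse.tail.init = A.tail.init.reverse
  rw [Arc.reverse_tail, Arc.reverse_init, Arc.tail_init_comm]

/-- The middle `ℓ`-segment of an `(ℓ+2)`-link. -/
def Link.mid2 {ℓ : ℕ} : G.Link (ℓ + 2) → G.Link ℓ :=
  Quot.lift (fun A => Link.mk A.mid2) (by
    rintro A B rfl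
    show Link.mk A.mid2 = Link.mk A.reverse.mid2
    rw [Arc.mid2_reverse, Link.mk_reverse])

/-- The middle unit of an arc: its middle vertex if its length is even, and its
middle edge if its length is odd. -/
def Arc.midUnit {ℓ : ℕ} (A : G.Arc ℓ) : V ⊕ E :=
  if h : Even ℓ then Sum.inl (A.verts ⟨ℓ / 2, by omega⟩)
  else Sum.inr (A.edges ⟨ℓ / 2, by
    have : ℓ % 2 = 1 := Nat.not_even_iff.mp h
    omega⟩)

lemma Arc.midUnit_reverse {ℓ : ℕ} (A : G.Arc ℓ) : A.reverse.midUnit = A.midUnit := by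
  by_cases h : Even ℓ
  · rw [Arc.midUnit, Arc.midUnit, dif_pos h, dif_pos h]
    have hk : ℓ % 2 = 0 := Nat.even_iff.mp h
    congr 1
    show A.verts (⟨ℓ / 2, _⟩ : Fin (ℓ + 1)).rev = A.verts _
    congr 1
    ext
    rw [Fin.val_rev]
    show ℓ + 1 - (ℓ / 2 + 1) = ℓ / 2
    omega
  · rw [Arc.midUnit, Arc.midUnit, dif_neg h, dif_neg h]
    have hk : ℓ % 2 = 1 := Nat.not_even_iff.mp h
    congr 1
    show A.edges (⟨ℓ / 2, _⟩ : Fin ℓ).rev = A.edges _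
    congr 1
    ext
    rw [Fin.val_rev]
    show ℓ - (ℓ / 2 + 1) = ℓ / 2
    omega

/-- The middle unit of a link: its middle vertex (even length) or middle edge
(odd length). -/
def Link.midUnit {ℓ : ℕ} : G.Link ℓ → V ⊕ E :=
  Quot.lift Arc.midUnit (by rintro A B rfl; exact (Arc.midUnit_reverse A).symm)

/-- `G` has a (nonnull) subgraph of minimum degree at least `d`. -/
def HasMinDegSubgraph (G : Multigraph V E) (d : ℕ) : Prop :=
  ∃ (V' : Set V) (E' : Set E), V'.Nonempty ∧ (∀ e ∈ E', ∀ v ∈ G.inc e, v ∈ V') ∧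
    ∀ v ∈ V', d ≤ Nat.card {e : E // e ∈ E' ∧ v ∈ G.inc e}

/-- The degeneracy of `G`: the maximum over subgraphs of the minimum degree. -/
noncomputable def degeneracy (G : Multigraph V E) : ℕ := sSup {d | G.HasMinDegSubgraph d}

/-- The edge-chromatic number of a multigraph: the least `t` such that the edges
can be `t`-coloured with edges sharing an endpoint getting distinct colours. -/
noncomputable def edgeChromaticNumber (G : Multigraph V E) : ℕ :=
  sInf {t | ∃ c : E → Fin t, ∀ e f : E, e ≠ f → (∃ v, v ∈ G.inc e ∧ v ∈ G.inc f) → c e ≠ c f}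

/-- The complete bipartite multigraph `K_{n,m}` (one edge for each pair). -/
def completeBipartiteMG (n m : ℕ) : Multigraph (Fin n ⊕ Fin m) (Fin n × Fin m) :=
  ⟨fun p => s(Sum.inl p.1, Sum.inr p.2)⟩

end Multigraph

/-- `H` contains a complete minor on `t` branch sets: `t` pairwise disjoint
nonempty connected subsets of vertices with an edge between every two of them. -/
def SimpleGraph.HasKMinor {W : Type} (H : SimpleGraph W) (t : ℕ) : Prop :=
  ∃ B : Fin t → Set W,
    (∀ i, (B i).Nonempty) ∧
    (∀ i, ((H.induce (B i)).Connected)) ∧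
    (∀ i j, i ≠ j → Disjoint (B i) (B j)) ∧
    (∀ i j, i ≠ j → ∃ u ∈ B i, ∃ v ∈ B j, H.Adj u v)

/-!
Group the colours `0, …, t - 1` into consecutive blocks of `r + 1`, and for every block that is
followed by at least one further colour, try to eliminate its first colour `x`: a vertex `u` of
colour `x` moves to a colour of `x + 1, …, x + r` that it does not see. If it sees all of them,
these are the only colours it sees, so it can move to the first colour of the last block, which
is never eliminated. This removes `⌊(t - 1)/(r + 1)⌋` colours, and
`t - ⌊(t - 1)/(r + 1)⌋ = ⌊tr/(r + 1)⌋ + 1`.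
-/

theorem Nat.sub_pred_div_succ_eq {t : ℕ} (r : ℕ) (ht : 0 < t) :
    t - (t - 1) / (r + 1) = t * r / (r + 1) + 1 := by
  obtain ⟨a, m, hm, rfl⟩ : ∃ a m, m ≤ r ∧ t = (r + 1) * a + m + 1 :=
    ⟨(t - 1) / (r + 1), (t - 1) % (r + 1), Nat.lt_succ_iff.mp (Nat.mod_lt _ r.succ_pos),
      by have := Nat.div_add_mod (t - 1) (r + 1); omega⟩
  have hdiv_pred : ((r + 1) * a + m + 1 - 1) / (r + 1) = a := by
    rw [Nat.add_sub_cancel, Nat.mul_add_div r.succ_pos, Nat.div_eq_of_lt (by omega), add_zero]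
  have hmul : ((r + 1) * a + m + 1) * r = (r + 1) * (a * r + m) + (r - m) := by
    obtain ⟨d, rfl⟩ := Nat.exists_eq_add_of_le hm
    rw [Nat.add_sub_cancel_left]; ring
  rw [hdiv_pred, hmul, Nat.mul_add_div r.succ_pos, Nat.div_eq_of_lt (by omega), add_zero]
  have : (r + 1) * a = a * r + a := by ring
  omega

theorem Nat.add_lt_of_succ_mul_lt_succ_mul {r i j : ℕ} (h : (r + 1) * i < (r + 1) * j) :
    (r + 1) * i + r < (r + 1) * j :=
  calc (r + 1) * i + r < (r + 1) * (i + 1) := by rw [mul_add_one]; omega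
    _ ≤ (r + 1) * j := Nat.mul_le_mul_left _ (Nat.lt_of_mul_lt_mul_left h)

namespace SimpleGraph

open Function

variable {W ι α : Type*} {H : SimpleGraph W} {lam : W → α} {r : ℕ}
  {e : ι ↪ α} {N : ι → Finset α} {σ : α}

variable (H lam e N σ) in
/-- The colours `e i` are the ones to eliminate, `N i` are the partner colours offered to the
vertices of colour `e i`, and `σ` is the common fallback colour. -/
def IsAdmissibleRecolour (u : W) (c : α) : Prop :=
  (lam u ∉ Set.range e ∧ c = lam u) ∨
    (∃ i, lam u = e i ∧ c ∈ N i ∧ c ∉ lam '' H.neighborSet u) ∨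
    (∃ i, lam u = e i ∧ c = σ ∧ lam '' H.neighborSet u = N i)

theorem exists_isAdmissibleRecolour [Finite α] (hfew : ∀ u, (lam '' H.neighborSet u).ncard ≤ r)
    (hN_card : ∀ i, r ≤ (N i).card) (u : W) : ∃ c, IsAdmissibleRecolour H lam e N σ u c := by
  by_cases hu : lam u ∈ Set.range e
  · obtain ⟨i, hi⟩ := hu
    by_cases hfree : ∃ c ∈ N i, c ∉ lam '' H.neighborSet u
    · obtain ⟨c, hc, hc'⟩ := hfree
      exact ⟨c, .inr (.inl ⟨i, hi.symm, hc, hc'⟩)⟩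
    · push Not at hfree
      have hseen : lam '' H.neighborSet u = N i :=
        (Set.eq_of_subset_of_ncard_le hfree (by
          rw [Set.ncard_coe_finset]; exact (hfew u).trans (hN_card i)) (Set.toFinite _)).symm
      exact ⟨σ, .inr (.inr ⟨i, hi.symm, rfl, hseen⟩)⟩
  · exact ⟨lam u, .inl ⟨hu, rfl⟩⟩

theorem IsAdmissibleRecolour.notMem_range {u : W} {c : α}
    (he_N : ∀ i j, e i ∉ N j) (hσ_e : ∀ i, e i ≠ σ)
    (h : IsAdmissibleRecolour H lam e N σ u c) : c ∉ Set.range e := by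
  rcases h with ⟨hu, rfl⟩ | ⟨i, -, hc, -⟩ | ⟨-, -, rfl, -⟩
  · exact hu
  · rintro ⟨j, rfl⟩; exact he_N j i hc
  · rintro ⟨j, hj⟩; exact hσ_e j hj

theorem IsAdmissibleRecolour.ne_of_adj {u v : W} {cu cv : α}
    (hproper : ∀ u v, H.Adj u v → lam u ≠ lam v) (hN_disj : Pairwise (Disjoint on N))
    (he_N : ∀ i j, e i ∉ N j) (hσ_N : ∀ i, σ ∉ N i) (huv : H.Adj u v)
    (hu : IsAdmissibleRecolour H lam e N σ u cu) (hv : IsAdmissibleRecolour H lam e N σ v cv) :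
    cu ≠ cv := by
  have hu_seen : lam u ∈ lam '' H.neighborSet v := ⟨u, huv.symm, rfl⟩
  have hv_seen : lam v ∈ lam '' H.neighborSet u := ⟨v, huv, rfl⟩
  rcases hu with ⟨-, rfl⟩ | ⟨i, hi, hcu, hcu'⟩ | ⟨i, hi, rfl, hseen_u⟩ <;>
    rcases hv with ⟨-, rfl⟩ | ⟨j, hj, hcv, hcv'⟩ | ⟨j, hj, rfl, hseen_v⟩
  · exact hproper u v huv
  · rintro rfl; exact hcv' hu_seen
  · rw [hseen_v] at hu_seen; rintro rfl; exact hσ_N j hu_seen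
  · rintro rfl; exact hcu' hv_seen
  · have hij : i ≠ j := by rintro rfl; exact hproper u v huv (hi.trans hj.symm)
    rintro rfl; exact Finset.disjoint_left.mp (hN_disj hij) hcu hcv
  · rintro rfl; exact hσ_N i hcu
  · rw [hseen_u] at hv_seen; rintro rfl; exact hσ_N i hv_seen
  · rintro rfl; exact hσ_N j hcv
  · rw [hseen_v, hi] at hu_seen; exact absurd hu_seen (he_N i j)

theorem colorable_card_sub_card_of_partners [Fintype α] [Fintype ι]
    (hproper : ∀ u v, H.Adj u v → lam u ≠ lam v)
    (hfew : ∀ u, (lam '' H.neighborSet u).ncard ≤ r)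
    (hN_card : ∀ i, r ≤ (N i).card) (hN_disj : Pairwise (Disjoint on N))
    (he_N : ∀ i j, e i ∉ N j) (hσ_N : ∀ i, σ ∉ N i) (hσ_e : ∀ i, e i ≠ σ) :
    H.Colorable (Fintype.card α - Fintype.card ι) := by
  classical
  choose μ hμ using exists_isAdmissibleRecolour (e := e) (σ := σ) hfew hN_card
  let C : H.Coloring {c // c ∉ Set.range e} :=
    Coloring.mk (fun u => ⟨μ u, (hμ u).notMem_range he_N hσ_e⟩)
      fun huv h => (hμ _).ne_of_adj hproper hN_disj he_N hσ_N huv (hμ _) (congrArg Subtype.val h)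
  simpa only [Fintype.card_subtype_compl, Fintype.card_range] using C.colorable

theorem colorable_sub_pred_div_succ {t : ℕ} {lam : W → Fin t} (ht : 0 < t)
    (hproper : ∀ u v, H.Adj u v → lam u ≠ lam v)
    (hfew : ∀ u, (lam '' H.neighborSet u).ncard ≤ r) : H.Colorable (t - (t - 1) / (r + 1)) := by
  set a := (t - 1) / (r + 1)
  have ha : (r + 1) * a ≤ t - 1 := by rw [mul_comm]; exact Nat.div_mul_le_self _ _
  have hlt : ∀ k : Fin a, (r + 1) * k + r < t - 1 := fun k =>
    Nat.add_lt_of_succ_mul_lt_succ_mul ((Nat.mul_lt_mul_left r.succ_pos).mpr k.isLt) |>.trans_le ha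
  let e : Fin a ↪ Fin t :=
    ⟨fun k => ⟨(r + 1) * k, by have := hlt k; omega⟩,
      fun k l h => Fin.ext (by simpa using h)⟩
  let N : Fin a → Finset (Fin t) := fun k =>
    Finset.Ioc (e k) ⟨(r + 1) * k + r, by have := hlt k; omega⟩
  let σ : Fin t := ⟨(r + 1) * a, by omega⟩
  have hmem_N : ∀ {c : Fin t} {k : Fin a},
      c ∈ N k ↔ (r + 1) * k < c ∧ (c : ℕ) ≤ (r + 1) * k + r := by
    intro c k
    simp only [N, Finset.mem_Ioc, Fin.lt_def, Fin.le_def]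
    rfl
  have hN_card : ∀ k, r ≤ (N k).card := fun k => by
    rw [Fin.card_Ioc]; change r ≤ (r + 1) * k + r - (r + 1) * k; omega
  have hN_disj : Pairwise (Disjoint on N) := by
    intro k l hkl
    refine Finset.disjoint_left.mpr fun c hck hcl => ?_
    rw [hmem_N] at hck hcl
    rcases Nat.lt_or_gt_of_ne (Fin.val_ne_of_ne hkl) with h | h <;>
      have := Nat.add_lt_of_succ_mul_lt_succ_mul ((Nat.mul_lt_mul_left r.succ_pos).mpr h) <;> omega
  have he_N : ∀ k l, e k ∉ N l := fun k l h => by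
    obtain ⟨h1, h2⟩ : (r + 1) * l < (r + 1) * k ∧ (r + 1) * k ≤ (r + 1) * l + r :=
      hmem_N.1 h
    have := Nat.add_lt_of_succ_mul_lt_succ_mul h1; omega
  have hσ_N : ∀ k, σ ∉ N k := fun k h => by
    obtain ⟨h1, h2⟩ : (r + 1) * k < (r + 1) * a ∧ (r + 1) * a ≤ (r + 1) * k + r :=
      hmem_N.1 h
    have := Nat.add_lt_of_succ_mul_lt_succ_mul h1; omega
  have hσ_e : ∀ k, e k ≠ σ := fun k h =>
    k.isLt.ne (Nat.eq_of_mul_eq_mul_left r.succ_pos (congrArg Fin.val h))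
  simpa using colorable_card_sub_card_of_partners hproper hfew hN_card hN_disj he_N hσ_N hσ_e

end SimpleGraph

theorem chromatic_of_few_neighbour_colours_general {W : Type} (H : SimpleGraph W)
    (t r : ℕ) (lam : W → Fin t)
    (hproper : ∀ u v : W, H.Adj u v → lam u ≠ lam v)
    (hfew : ∀ u : W, Set.ncard {c : Fin t | ∃ v : W, H.Adj u v ∧ lam v = c} ≤ r) :
    H.chromaticNumber ≤ ((t * r / (r + 1) + 1 : ℕ) : ℕ∞) := by
  obtain rfl | ht := t.eq_zero_or_pos
  · have hcol : H.Colorable 0 := by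
      simpa using (SimpleGraph.Coloring.mk lam fun huv => hproper _ _ huv).colorable
    exact hcol.chromaticNumber_le.trans (by simp)
  · rw [← Nat.sub_pred_div_succ_eq r ht]
    exact (SimpleGraph.colorable_sub_pred_div_succ ht hproper hfew).chromaticNumber_le

/-- If a finite loopless graph `H` has a proper `t`-colouring in which
every vertex is adjacent to vertices of at most `r` distinct colours, then
`χ(H) ≤ ⌊tr/(r+1)⌋ + 1`. -/
theorem chromatic_of_few_neighbour_colours {W : Type} [Fintype W] (H : SimpleGraph W)
    (t r : ℕ) (lam : W → Fin t)
    (hproper : ∀ u v : W, H.Adj u v → lam u ≠ lam v)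
    (hfew : ∀ u : W, Set.ncard {c : Fin t | ∃ v : W, H.Adj u v ∧ lam v = c} ≤ r) :
    H.chromaticNumber ≤ ((t * r / (r + 1) + 1 : ℕ) : ℕ∞) :=
  chromatic_of_few_neighbour_colours_general H t r lam hproper hfew
end

section
/- Let G be a finite loopless multigraph and ℓ ≥ 2. Then χ(L_ℓ(G)) ≤ ⌊(2/3)·χ(L_{ℓ−2}(G))⌋ + 1. -/
/-!
Colour each `ℓ`-link by the colour of its middle `(ℓ-2)`-link in an optimal colouring of
`L_{ℓ-2}(G)`. Taking middles is a graph homomorphism `L_ℓ(G) → L_{ℓ-2}(G)`, so this colouring is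
proper, and the middle of every neighbour of an `ℓ`-link is one of its two extreme
`(ℓ-2)`-subsegments, so each vertex sees at most two colours besides its own. Grouping the `t`
colours into triples, each triple can then be recoloured with two colours of its own and one
extra colour shared by all triples, for `⌊2t/3⌋ + 1` colours in total.
-/

/-- In the triple `{3i, 3i+1, 3i+2}`, colour `3i+1` becomes `2i` and `3i+2` becomes `2i+1`; a
vertex of colour `3i` whose two seen colours are `a` and `b` joins the class `2i` or `2i+1` of
the one of `3i+1`, `3i+2` it does not see, and takes the shared colour `⌊2t/3⌋` if it sees
both. -/
def recolourByTriples (t c a b : ℕ) : ℕ :=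
  if c % 3 = 0 ∧ ((a = c + 1 ∧ b = c + 2) ∨ (a = c + 2 ∧ b = c + 1)) then 2 * t / 3
  else 2 * (c / 3) + if c % 3 = 2 ∨ (c % 3 = 0 ∧ (a = c + 1 ∨ b = c + 1)) then 1 else 0

lemma recolourByTriples_comm (t c a b : ℕ) :
    recolourByTriples t c a b = recolourByTriples t c b a := by
  unfold recolourByTriples; split_ifs <;> omega

lemma recolourByTriples_lt {t c a b : ℕ} (hc : c < t) (ha : a < t) (hb : b < t) :
    recolourByTriples t c a b < 2 * t / 3 + 1 := by
  unfold recolourByTriples; split_ifs <;> omega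

lemma recolourByTriples_ne {t c c' b b' : ℕ} (hc : c < t) (hc' : c' < t) (hne : c ≠ c') :
    recolourByTriples t c c' b ≠ recolourByTriples t c' c b' := by
  unfold recolourByTriples; split_ifs <;> omega

lemma exists_recolourByTriples_eq {t c a b a' : ℕ} (h : a' = a ∨ a' = b) :
    ∃ b', recolourByTriples t c a b = recolourByTriples t c a' b' := by
  rcases h with rfl | rfl
  · exact ⟨b, rfl⟩
  · exact ⟨a, recolourByTriples_comm t c a a'⟩

theorem SimpleGraph.Coloring.colorable_two_mul_div_three_add_one {W : Type*}
    {H : SimpleGraph W} {t : ℕ} (C : H.Coloring (Fin t))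
    (hC : ∀ v, ∃ a b : Fin t, ∀ w, H.Adj v w → C w = a ∨ C w = b) :
    H.Colorable (2 * t / 3 + 1) := by
  choose a b hab using hC
  let C' : W → ℕ := fun v => recolourByTriples t (C v) (a v) (b v)
  refine ⟨SimpleGraph.Coloring.mk
    (fun v => ⟨C' v, recolourByTriples_lt (C v).2 (a v).2 (b v).2⟩) fun {v w} hvw heq => ?_⟩
  obtain ⟨x, hx⟩ : ∃ x, C' v = recolourByTriples t (C v) (C w) x :=
    exists_recolourByTriples_eq ((hab v w hvw).imp (congrArg Fin.val) (congrArg Fin.val))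
  obtain ⟨y, hy⟩ : ∃ y, C' w = recolourByTriples t (C w) (C v) y :=
    exists_recolourByTriples_eq ((hab w v hvw.symm).imp (congrArg Fin.val) (congrArg Fin.val))
  exact recolourByTriples_ne (C v).2 (C w).2 (fun h => C.valid hvw (Fin.ext h))
    (hx.symm.trans ((congrArg Fin.val heq).trans hy))

namespace Multigraph

variable {V E : Type} {G : Multigraph V E} {m : ℕ}

lemma Link.mk_eq_mk_iff {A B : G.Arc m} : Link.mk A = Link.mk B ↔ B = A ∨ B = A.reverse := by
  refine ⟨fun h => ?_, ?_⟩
  · have hE := Quot.eq.mp h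
    clear h
    induction hE with
    | rel x y hxy => exact Or.inr hxy
    | refl x => exact Or.inl rfl
    | symm x y _ ih =>
      rcases ih with rfl | rfl
      · exact Or.inl rfl
      · exact Or.inr x.reverse_reverse.symm
    | trans x y z _ _ ih₁ ih₂ =>
      rcases ih₁ with rfl | rfl
      · exact ih₂
      · rcases ih₂ with rfl | rfl
        · exact Or.inr rfl
        · exact Or.inl x.reverse_reverse
  · rintro (rfl | rfl)
    · rfl
    · exact (Link.mk_reverse A).symm

lemma Arc.verts_castSucc_ne_succ (hG : G.Loopless) (A : G.Arc m) (i : Fin m) :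
    A.verts i.castSucc ≠ A.verts i.succ := fun h =>
  hG (A.edges i) (by rw [A.inc_eq i, Sym2.mk_isDiag_iff]; exact h)

lemma Arc.tail_ne_init (hG : G.Loopless) (D : G.Arc (m + 1)) : D.tail ≠ D.init := fun h =>
  D.verts_castSucc_ne_succ hG 0 (congrArg (fun X : G.Arc m => X.verts 0) h).symm

/-- A non-backtracking walk in a loopless multigraph is never a palindrome: its middle would be
a loop (even length) or a backtrack (odd length). -/
lemma Arc.tail_ne_init_reverse (hG : G.Loopless) (D : G.Arc (m + 1)) :
    D.tail ≠ D.init.reverse := by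
  intro h
  obtain ⟨s, rfl | rfl⟩ := Nat.even_or_odd' m
  · have hv := congrArg (fun X : G.Arc (2 * s) => X.verts ⟨s, by omega⟩) h
    refine D.verts_castSucc_ne_succ hG ⟨s, by omega⟩ (Eq.trans ?_ hv.symm)
    congr 1
    ext
    simp only [Fin.val_castSucc, Fin.val_rev]
    omega
  · have he := congrArg (fun X : G.Arc (2 * s + 1) => X.edges ⟨s, by omega⟩) h
    refine D.nb ⟨s, by omega⟩ ⟨s + 1, by omega⟩ rfl (Eq.trans ?_ he.symm)
    congr 1
    ext
    simp only [Fin.val_castSucc, Fin.val_rev]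
    omega

lemma toSimple_linkGraph_adj_mk_init_mk_tail (hG : G.Loopless) (D : G.Arc (m + 1)) :
    (G.linkGraph m).toSimple.Adj (Link.mk D.init) (Link.mk D.tail) := by
  refine ⟨fun h => ?_, Link.mk D, rfl⟩
  rcases Link.mk_eq_mk_iff.mp h with h | h
  exacts [D.tail_ne_init hG h, D.tail_ne_init_reverse hG h]

lemma exists_arc_of_toSimple_linkGraph_adj {X Y : G.Link m} (h : (G.linkGraph m).toSimple.Adj X Y) :
    ∃ D : G.Arc (m + 1), Link.mk D.init = X ∧ Link.mk D.tail = Y := by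
  obtain ⟨-, e, he⟩ := h
  obtain ⟨D, rfl⟩ := Quot.exists_rep e
  change s(Link.mk D.init, Link.mk D.tail) = s(X, Y) at he
  rcases Sym2.eq_iff.mp he with ⟨hX, hY⟩ | ⟨hY, hX⟩
  · exact ⟨D, hX, hY⟩
  · refine ⟨D.reverse, ?_, ?_⟩
    · rw [Arc.reverse_init, Link.mk_reverse, hX]
    · rw [Arc.reverse_tail, Link.mk_reverse, hY]

def mid2Hom (hG : G.Loopless) {k : ℕ} :
    (G.linkGraph (k + 2)).toSimple →g (G.linkGraph k).toSimple where
  toFun := Link.mid2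
  map_rel' h := by
    obtain ⟨D, rfl, rfl⟩ := exists_arc_of_toSimple_linkGraph_adj h
    change (G.linkGraph k).toSimple.Adj (Link.mk D.init.tail.init) (Link.mk D.tail.tail.init)
    rw [← Arc.tail_init_comm, Arc.tail_init_comm D.tail]
    exact toSimple_linkGraph_adj_mk_init_mk_tail hG D.tail.init

lemma Link.mid2_eq_of_adj {k : ℕ} (A : G.Arc (k + 2)) {Y : G.Link (k + 2)}
    (h : (G.linkGraph (k + 2)).toSimple.Adj (Link.mk A) Y) :
    Y.mid2 = Link.mk A.init.init ∨ Y.mid2 = Link.mk A.tail.tail := by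
  obtain ⟨D, hD, rfl⟩ := exists_arc_of_toSimple_linkGraph_adj h
  change Link.mk D.tail.tail.init = _ ∨ Link.mk D.tail.tail.init = _
  rw [Arc.tail_init_comm D.tail, Arc.tail_init_comm D]
  rcases Link.mk_eq_mk_iff.mp hD with rfl | rfl
  · exact Or.inr rfl
  · left
    rw [Arc.reverse_init, Arc.reverse_init, Link.mk_reverse]

end Multigraph

theorem chromatic_linkGraph_rec_general {V E : Type} (G : Multigraph V E)
    (hG : G.Loopless) (ℓ : ℕ) (hℓ : 2 ≤ ℓ) (n : ℕ)
    (hn : ((G.linkGraph (ℓ - 2)).toSimple).chromaticNumber = n) :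
    ((G.linkGraph ℓ).toSimple).chromaticNumber ≤ ((2 * n / 3 + 1 : ℕ) : ℕ∞) := by
  obtain ⟨k, rfl⟩ : ∃ k, ℓ = k + 2 := ⟨ℓ - 2, by omega⟩
  rw [Nat.add_sub_cancel] at hn
  obtain ⟨c₀⟩ := SimpleGraph.chromaticNumber_le_iff_colorable.mp hn.le
  refine SimpleGraph.Colorable.chromaticNumber_le <|
    SimpleGraph.Coloring.colorable_two_mul_div_three_add_one (c₀.comp (Multigraph.mid2Hom hG))
      fun X => ?_
  obtain ⟨A, rfl⟩ := Quot.exists_rep X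
  exact ⟨c₀ (Multigraph.Link.mk A.init.init), c₀ (Multigraph.Link.mk A.tail.tail),
    fun Y h => (Multigraph.Link.mid2_eq_of_adj A h).imp (congrArg c₀) (congrArg c₀)⟩

/-- For a finite loopless multigraph `G` and `ℓ ≥ 2`,
`χ(L_ℓ(G)) ≤ ⌊(2/3) χ(L_{ℓ-2}(G))⌋ + 1`. -/
theorem chromatic_linkGraph_rec {V E : Type} [Finite V] [Finite E] (G : Multigraph V E)
    (hG : G.Loopless) (ℓ : ℕ) (hℓ : 2 ≤ ℓ) (n : ℕ)
    (hn : ((G.linkGraph (ℓ - 2)).toSimple).chromaticNumber = n) :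
    ((G.linkGraph ℓ).toSimple).chromaticNumber ≤ ((2 * n / 3 + 1 : ℕ) : ℕ∞) :=
  chromatic_linkGraph_rec_general G hG ℓ hℓ n hn
end
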